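/- arXiv:2204.01669 — 5 statements merged into one kernel-verified Lean document; each statement's English description precedes it below -/
import Mathlib

section
/- Let ψ ∈ ℂ and let L ⊆ ℂ⁶ be a 2-dimensional ℂ-linear subspace such that every point (u,v,w,x,y,z) ∈ L satisfies v + w + x + y + z = 5ψu and vwxyz = u⁵. Then u = 0 for every point of L, and moreover there exists one of the five coordinates t ∈ {v,w,x,y,z} such that t = 0 for every point of L. (Equivalently: every line contained in the singular mirror quintic Y_ψ ⊂ ℙ⁵ is contained in one of the five planes {u = 0, t = 0}, t ∈ {v,w,x,y,z}.) -/
/-!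
On `L` the coordinates are linear forms `u, t₁, …, t₅` with `t₁ ⋯ t₅ = u⁵`, so every `ker tᵢ` lies
in `ker u`. If `u ≠ 0` on `L`, these kernels all equal the line `ker u`, on which all six
coordinates would then vanish, which is absurd since they separate the points of `L`. Hence
`u = 0`, so `t₁ ⋯ t₅` vanishes on `L`, and as `ℂ` is infinite, `L` is not the union of the
five kernels `ker tᵢ` unless one of them is all of `L`.
-/

open Module LinearMap

namespace Module.Dual

variable {K E ι : Type*} [Field K] [AddCommGroup E] [Module K E]

theorem ker_eq_of_ker_le {g t : Dual K E} (h : ker t ≤ ker g) (hg : g ≠ 0) : ker t = ker g := by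
  obtain ⟨p, hp⟩ : ∃ p, g p ≠ 0 := by
    by_contra! H
    exact hg (LinearMap.ext H)
  refine le_antisymm h fun q hq => ?_
  -- `t` kills `t q • p - t p • q`, hence so does `g`; as `g q = 0`, that value is `t q * g p`.
  have hr : g (t q • p - t p • q) = 0 := h (by simp [mul_comm])
  rw [mem_ker] at hq ⊢
  simpa [hq, hp] using hr

theorem eq_zero_of_prod_eq_pow [Fintype ι] {n : ℕ} (g : Dual K E) (t : ι → Dual K E)
    (hsep : ∀ x, g x = 0 → (∀ i, t i x = 0) → x = 0) (h : ∀ x, ∏ i, t i x = g x ^ n)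
    (hE : 1 < finrank K E) : g = 0 := by
  by_contra hg
  have : FiniteDimensional K E := Module.finite_of_finrank_pos (by omega)
  obtain ⟨q, hq, hq0⟩ := (ker g).ne_bot_iff.mp <| ker_ne_bot_of_finrank_lt (f := g) (by simpa)
  refine hq0 (hsep q hq fun i => ?_)
  have hle : ker (t i) ≤ ker g := fun x hx => by
    have := h x
    rw [Finset.prod_eq_zero (Finset.mem_univ i) (mem_ker.mp hx)] at this
    exact mem_ker.mpr (eq_zero_of_pow_eq_zero this.symm)
  exact (ker_eq_of_ker_le hle hg).ge hq

theorem exists_eq_zero_of_prod_eq_zero [Infinite K] [Fintype ι] (t : ι → Dual K E)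
    (h : ∀ x, ∏ i, t i x = 0) : ∃ i, t i = 0 := by
  obtain ⟨i, hi⟩ := Subspace.exists_eq_top_of_iUnion_eq_univ (p := fun i => ker (t i)) <|
    Set.eq_univ_of_forall fun x => by
      obtain ⟨i, -, hi⟩ := Finset.prod_eq_zero_iff.mp (h x)
      exact Set.mem_iUnion.mpr ⟨i, hi⟩
  exact ⟨i, ker_eq_top.mp hi⟩

end Module.Dual

theorem line_in_mirror_quintic_lies_in_a_plane_general
    (L : Submodule ℂ (Fin 6 → ℂ)) (hdim : Module.finrank ℂ L = 2)
    (heq2 : ∀ p ∈ L, p 1 * p 2 * p 3 * p 4 * p 5 = p 0 ^ 5) :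
    (∀ p ∈ L, p 0 = 0) ∧ ∃ i : Fin 6, i ≠ 0 ∧ ∀ p ∈ L, p i = 0 := by
  let coord (i : Fin 6) : Dual ℂ L := (proj i).domRestrict L
  have hprod (x : L) : ∏ j : Fin 5, coord j.succ x = coord 0 x ^ 5 := by
    simpa [coord, Fin.prod_univ_five] using heq2 x x.2
  have hsep (x : L) (h0 : coord 0 x = 0) (hsucc : ∀ j : Fin 5, coord j.succ x = 0) : x = 0 :=
    Subtype.ext <| funext <| Fin.cases h0 hsucc
  have hu : coord 0 = 0 :=
    (coord 0).eq_zero_of_prod_eq_pow _ hsep hprod (by rw [hdim]; norm_num)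
  obtain ⟨j, hj⟩ := Dual.exists_eq_zero_of_prod_eq_zero (fun j : Fin 5 => coord j.succ)
    fun x => by simp [hprod, hu]
  exact ⟨fun p hp => congr($hu ⟨p, hp⟩),
    j.succ, Fin.succ_ne_zero j, fun p hp => congr($hj ⟨p, hp⟩)⟩

/-- Every line contained in the singular mirror quintic `Y_ψ ⊂ ℙ⁵` (given as a
2-dimensional linear subspace `L ⊆ ℂ⁶` on which both defining equations hold
identically, with coordinates `(u,v,w,x,y,z) = (p 0, p 1, p 2, p 3, p 4, p 5)`)
satisfies `u ≡ 0` on `L`, and moreover one of the five coordinates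
`v,w,x,y,z` vanishes identically on `L`. -/
theorem line_in_mirror_quintic_lies_in_a_plane (ψ : ℂ)
    (L : Submodule ℂ (Fin 6 → ℂ)) (hdim : Module.finrank ℂ L = 2)
    (heq1 : ∀ p ∈ L, p 1 + p 2 + p 3 + p 4 + p 5 = 5 * ψ * p 0)
    (heq2 : ∀ p ∈ L, p 1 * p 2 * p 3 * p 4 * p 5 = p 0 ^ 5) :
    (∀ p ∈ L, p 0 = 0) ∧ ∃ i : Fin 6, i ≠ 0 ∧ ∀ p ∈ L, p i = 0 :=
  line_in_mirror_quintic_lies_in_a_plane_general L hdim heq2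
end

section
/- Let ψ ∈ ℂ and let L ⊆ ℂ⁶ be a 2-dimensional ℂ-linear subspace such that every point (u,v,w,x,y,z) ∈ L satisfies v + w + x + y + z = 5ψu and vwxyz = u⁵. Then the coordinate u vanishes identically on L. (If u were not identically zero on L, its zero locus on L would be a single point p ≠ 0 at which all six coordinates of ℂ⁶ would have to vanish, a contradiction.) -/
/-- For a line contained in the singular mirror quintic `Y_ψ ⊂ ℙ⁵` (given as a
2-dimensional linear subspace `L ⊆ ℂ⁶` on which both defining equations hold
identically, with coordinates `(u,v,w,x,y,z) = (p 0, p 1, p 2, p 3, p 4, p 5)`),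
the coordinate `u` vanishes identically on `L`. -/
theorem u_vanishes_on_line_in_mirror_quintic (ψ : ℂ)
    (L : Submodule ℂ (Fin 6 → ℂ)) (hdim : Module.finrank ℂ L = 2)
    (heq1 : ∀ p ∈ L, p 1 + p 2 + p 3 + p 4 + p 5 = 5 * ψ * p 0)
    (heq2 : ∀ p ∈ L, p 1 * p 2 * p 3 * p 4 * p 5 = p 0 ^ 5) :
    ∀ p ∈ L, p 0 = 0 := by
  intro p hp
  by_contra hp0
  classical
  have : FiniteDimensional ℂ L := inferInstance
  -- the coordinate functional u on L
  let g : L →ₗ[ℂ] ℂ := (LinearMap.proj 0).comp L.subtype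
  have hker : LinearMap.ker g ≠ ⊥ := by
    intro h
    have hinj : Function.Injective g := LinearMap.ker_eq_bot.mp h
    have hle := LinearMap.finrank_le_finrank_of_injective hinj
    rw [hdim, Module.finrank_self] at hle
    omega
  obtain ⟨q, hq0, hqne⟩ := (Submodule.ne_bot_iff _).mp hker
  have hq0' : (q : Fin 6 → ℂ) 0 = 0 := hq0
  -- each of the coordinates 1..5 of q vanishes
  have key : ∀ i : Fin 6, i ≠ 0 → (q : Fin 6 → ℂ) i = 0 := by
    intro i hi
    by_contra hqi
    set t : ℂ := -(p i) / (q : Fin 6 → ℂ) i with ht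
    set r : Fin 6 → ℂ := p + t • (q : Fin 6 → ℂ) with hr
    have hrL : r ∈ L := L.add_mem hp (L.smul_mem t q.2)
    have hri : r i = 0 := by
      simp only [hr, Pi.add_apply, Pi.smul_apply, smul_eq_mul, ht]
      field_simp
      ring
    have hr0 : r 0 = p 0 := by
      simp [hr, hq0']
    have h2 := heq2 r hrL
    rw [hr0] at h2
    have hp05 : p 0 ^ 5 ≠ 0 := pow_ne_zero _ hp0
    apply hp05
    rw [← h2]
    fin_cases i
    · exact absurd rfl hi
    · rw [show r 1 = 0 from hri]; ring
    · rw [show r 2 = 0 from hri]; ring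
    · rw [show r 3 = 0 from hri]; ring
    · rw [show r 4 = 0 from hri]; ring
    · rw [show r 5 = 0 from hri]; ring
  have : (q : Fin 6 → ℂ) = 0 := by
    funext i
    by_cases h : i = 0
    · simp [h, hq0']
    · exact key i h
  exact hqne (Subtype.ext this)
end

section
/- The 180 relation vectors R^{st,u}_m, as m ranges over the 60 degree-5 exponent vectors with exactly three nonzero entries and as u ranges over the three elements of supp(m) (with {s,t} the remaining two), span a subspace of dimension exactly 120 in the ℚ-vector space V freely spanned by the 300 γ-pairs. -/
/-- The indicator (standard basis) vector of `i : Fin 5`. -/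
def e (i : Fin 5) : Fin 5 → ℕ := fun k => if k = i then 1 else 0

/-- The ℚ-vector space freely spanned by unordered pairs of exponent vectors;
the 300 γ-pairs sit among the basis elements. -/
abbrev V : Type := Sym2 (Fin 5 → ℕ) →₀ ℚ

/-- The basis vector `⟨{a, b}⟩` of `V` indexed by the unordered pair `{a, b}`. -/
noncomputable def gvec (a b : Fin 5 → ℕ) : V := Finsupp.single s(a, b) 1

/-- The relation vector `R^{st,u}_m` attached to a ruling of the compact
divisor `D_m ≅ dP₃`. -/
noncomputable def Rvec (m : Fin 5 → ℕ) (s t u : Fin 5) : V :=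
  gvec m (fun k => m k + e s k - e u k) + gvec m (fun k => m k + e t k - e u k)
    - gvec m (fun k => m k + e u k - e t k)
    - gvec m (fun k => m k + e u k - e s k)

/-- The set of the 180 relation vectors `R^{st,u}_m`, as `m` ranges over the
60 degree-5 exponent vectors with exactly three nonzero entries and `u` over
the three elements of `supp m` (with `{s,t}` the remaining two). -/
def RelSetR : Set V :=
  {v | ∃ (m : Fin 5 → ℕ) (s t u : Fin 5), (∑ i, m i) = 5 ∧
    s ≠ t ∧ s ≠ u ∧ t ≠ u ∧ Function.support m = {s, t, u} ∧
    v = Rvec m s t u}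

/-!
The vector `R^{st,u}_m` depends only on `m` and `u`, and the three vectors attached to `m` sum
to zero, so each `m` contributes at most two dimensions. Conversely, `5` has no composition into
three parts that are all at least `2`, so some `p ∈ supp m` has `m p = 1`. For `u ≠ p` the vector
`n = m + e u - e p` then has only two nonzero entries, so `⟨{m, n}⟩` occurs only in relation
vectors attached to `m`, namely with coefficient `-1` in the one indexed by `u` and with
coefficient `1` in the one indexed by `p`. Discarding the vector indexed by `p` for each of the
`60` exponent vectors `m` leaves `120` vectors with a biorthogonal family of coordinate functionals.
-/
open Finset

def shift (m : Fin 5 → ℕ) (i j : Fin 5) : Fin 5 → ℕ := fun k => m k + e i k - e j k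

lemma Rvec_eq (m : Fin 5 → ℕ) (s t u : Fin 5) :
    Rvec m s t u = gvec m (shift m s u) + gvec m (shift m t u) - gvec m (shift m u t)
      - gvec m (shift m u s) := rfl

lemma Rvec_comm (m : Fin 5 → ℕ) (s t u : Fin 5) : Rvec m s t u = Rvec m t s u := by
  simp only [Rvec_eq]; abel

lemma Rvec_add_Rvec_add_Rvec (m : Fin 5 → ℕ) (s t u : Fin 5) :
    Rvec m s t u + Rvec m t u s + Rvec m u s t = 0 := by
  simp only [Rvec_eq]; abel

lemma shift_eq_shift_iff {m : Fin 5 → ℕ} {i j i' j' : Fin 5} (hij : i ≠ j) (hij' : i' ≠ j')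
    (hj : m j ≠ 0) (hj' : m j' ≠ 0) : shift m i j = shift m i' j' ↔ i = i' ∧ j = j' := by
  refine ⟨fun h => ?_, fun ⟨rfl, rfl⟩ => rfl⟩
  have hi := congrFun h i
  have hj := congrFun h j
  simp only [shift, e] at hi hj
  split_ifs at hi hj <;> simp_all <;> omega

lemma gvec_apply_mk_left (m n n' : Fin 5 → ℕ) :
    gvec m n s(m, n') = if n = n' then 1 else 0 := by
  simp only [gvec, Finsupp.single_apply, Sym2.congr_right]

lemma Rvec_apply_of_ne {m a b : Fin 5 → ℕ} (ha : m ≠ a) (hb : m ≠ b) (s t u : Fin 5) :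
    Rvec m s t u s(a, b) = 0 := by
  have : ∀ n, gvec m n s(a, b) = 0 := fun n => by
    simp [gvec, ha, hb]
  simp [Rvec_eq, this]

structure IsRelIndex (m : Fin 5 → ℕ) (s t u : Fin 5) : Prop where
  sum_eq : ∑ i, m i = 5
  hst : s ≠ t
  hsu : s ≠ u
  htu : t ≠ u
  support_eq : Function.support m = {s, t, u}

lemma mem_RelSetR {v : V} :
    v ∈ RelSetR ↔ ∃ m s t u, IsRelIndex m s t u ∧ v = Rvec m s t u :=
  exists₄_congr fun _ _ _ _ =>
    ⟨fun ⟨h1, h2, h3, h4, h5, h6⟩ => ⟨⟨h1, h2, h3, h4, h5⟩, h6⟩,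
      fun ⟨⟨h1, h2, h3, h4, h5⟩, h6⟩ => ⟨h1, h2, h3, h4, h5, h6⟩⟩

namespace IsRelIndex

variable {m : Fin 5 → ℕ} {s t u : Fin 5}

lemma ne_zero_iff (h : IsRelIndex m s t u) {k : Fin 5} : m k ≠ 0 ↔ k = s ∨ k = t ∨ k = u := by
  rw [← Function.mem_support, h.support_eq]
  simp

lemma ne_zero (h : IsRelIndex m s t u) : m s ≠ 0 ∧ m t ≠ 0 ∧ m u ≠ 0 :=
  ⟨h.ne_zero_iff.mpr (.inl rfl), h.ne_zero_iff.mpr (.inr (.inl rfl)),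
    h.ne_zero_iff.mpr (.inr (.inr rfl))⟩

lemma swap (h : IsRelIndex m s t u) : IsRelIndex m t s u :=
  ⟨h.sum_eq, h.hst.symm, h.htu, h.hsu, by rw [h.support_eq, Set.insert_comm]⟩

lemma rotate (h : IsRelIndex m s t u) : IsRelIndex m t u s :=
  ⟨h.sum_eq, h.htu, h.hst.symm, h.hsu.symm, by
    rw [h.support_eq, Set.insert_comm, Set.pair_comm]⟩

lemma add_add_eq (h : IsRelIndex m s t u) : m s + m t + m u = 5 := by
  rw [← h.sum_eq, ← Finset.sum_subset (Finset.subset_univ {s, t, u})]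
  · simp [h.hst, h.hsu, h.htu, add_assoc]
  · intro k _ hk
    by_contra hmk
    simp [h.ne_zero_iff.mp hmk] at hk

lemma exists_eq_one (h : IsRelIndex m s t u) : ∃ k, m k = 1 := by
  obtain ⟨hs, ht, hu⟩ := h.ne_zero
  have := h.add_add_eq
  obtain h1 | h1 | h1 : m s = 1 ∨ m t = 1 ∨ m u = 1 := by omega
  exacts [⟨s, h1⟩, ⟨t, h1⟩, ⟨u, h1⟩]

lemma eq_of_lt {s' t' : Fin 5} (h : IsRelIndex m s t u) (h' : IsRelIndex m s' t' u)
    (hst : s < t) (hst' : s' < t') : s = s' ∧ t = t' := by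
  have hs := h.ne_zero_iff.mp h'.ne_zero.1
  have ht := h.ne_zero_iff.mp h'.ne_zero.2.1
  have hs' := h'.ne_zero_iff.mp h.ne_zero.1
  obtain ⟨-, -, hsu, htu, -⟩ := h
  obtain ⟨-, -, hsu', htu', -⟩ := h'
  simp only [Fin.ext_iff, Fin.lt_def, ne_eq] at *
  omega

lemma Rvec_apply_shift {i j : Fin 5} (h : IsRelIndex m s t u)
    (hij : i ≠ j) (hj : m j ≠ 0) :
    Rvec m s t u s(m, shift m i j) =
      (if s = i ∧ u = j then 1 else 0) + (if t = i ∧ u = j then 1 else 0)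
        - (if u = i ∧ t = j then 1 else 0) - (if u = i ∧ s = j then 1 else 0) := by
  obtain ⟨hs, ht, hu⟩ := h.ne_zero
  simp only [Rvec_eq, Finsupp.coe_add, Finsupp.coe_sub, Pi.add_apply, Pi.sub_apply,
    gvec_apply_mk_left, shift_eq_shift_iff h.hsu hij hu hj, shift_eq_shift_iff h.htu hij hu hj,
    shift_eq_shift_iff h.htu.symm hij ht hj, shift_eq_shift_iff h.hsu.symm hij hs hj]

lemma ne_shift {m' : Fin 5 → ℕ} {s' t' u' p : Fin 5} (h : IsRelIndex m s t u)
    (h' : IsRelIndex m' s' t' u') (hp : m p = 1) (hpu : p ≠ u) : m' ≠ shift m u p := by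
  intro heq
  have hsupp : ∀ k, m' k ≠ 0 → k ≠ p ∧ (k = s ∨ k = t ∨ k = u) := by
    intro k hk
    rw [heq] at hk
    by_cases hku : k = u
    · exact ⟨hku ▸ hpu.symm, Or.inr (Or.inr hku)⟩
    by_cases hkp : k = p
    · simp [shift, e, hkp, hpu, hp] at hk
    · simp only [shift, e, hku, hkp, if_false, add_zero, tsub_zero] at hk
      exact ⟨hkp, h.ne_zero_iff.mp hk⟩
  have hs' := hsupp s' h'.ne_zero.1
  have ht' := hsupp t' h'.ne_zero.2.1
  have hu' := hsupp u' h'.ne_zero.2.2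
  have hp' := h.ne_zero_iff.mp (by rw [hp]; exact one_ne_zero)
  obtain ⟨-, hst, hsu, htu, -⟩ := h
  obtain ⟨-, hst', hsu', htu', -⟩ := h'
  simp only [Fin.ext_iff, ne_eq] at *
  omega

end IsRelIndex

def IsPivot (m : Fin 5 → ℕ) (p : Fin 5) : Prop := m p = 1 ∧ ∀ k < p, m k ≠ 1

instance (m : Fin 5 → ℕ) (p : Fin 5) : Decidable (IsPivot m p) :=
  inferInstanceAs (Decidable (_ ∧ _))

lemma IsPivot.unique {m : Fin 5 → ℕ} {p q : Fin 5} (hp : IsPivot m p) (hq : IsPivot m q) :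
    p = q := by
  rcases lt_trichotomy p q with h | h | h
  · exact absurd hp.1 (hq.2 p h)
  · exact h
  · exact absurd hq.1 (hp.2 q h)

lemma exists_isPivot {m : Fin 5 → ℕ} (h : ∃ k, m k = 1) : ∃ p, IsPivot m p := by
  obtain ⟨p, hp, hmin⟩ := wellFounded_lt.has_min {k | m k = 1} h
  exact ⟨p, hp, fun k hk hk1 => hmin k hk1 hk⟩

/-- The prefilter on the size of the support only serves to make `card_relIndex` fast. -/
def relIndex : Finset ((Fin 5 → ℕ) × Fin 5 × Fin 5 × Fin 5) :=
  ({m ∈ Nat.antidiagonalTuple 5 5 | #{k | m k ≠ 0} = 3} ×ˢ univ).filter fun ⟨m, s, t, u⟩ =>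
    s < t ∧ s ≠ u ∧ t ≠ u ∧ (∀ k, m k ≠ 0 ↔ k = s ∨ k = t ∨ k = u) ∧ ¬ IsPivot m u

lemma card_relIndex : #relIndex = 120 := by decide +kernel

-- Otherwise elaboration may try to evaluate `relIndex` when checking membership in it.
attribute [irreducible] relIndex

lemma mem_relIndex {m : Fin 5 → ℕ} {s t u : Fin 5} :
    (m, s, t, u) ∈ relIndex ↔ IsRelIndex m s t u ∧ s < t ∧ ¬ IsPivot m u := by
  simp only [relIndex, mem_filter, mem_product, Nat.mem_antidiagonalTuple, mem_univ, and_true]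
  constructor
  · rintro ⟨⟨hsum, -⟩, hst, hsu, htu, hsupp, hu⟩
    exact ⟨⟨hsum, hst.ne, hsu, htu, Set.ext fun k => by simpa using hsupp k⟩, hst, hu⟩
  · rintro ⟨h, hst, hu⟩
    have hsupp : ({k | m k ≠ 0} : Finset (Fin 5)) = {s, t, u} := by
      ext k
      simp [h.ne_zero_iff]
    exact ⟨⟨h.sum_eq, card_eq_three.mpr ⟨s, t, u, h.hst, h.hsu, h.htu, hsupp⟩⟩, hst, h.hsu,
      h.htu, fun k => h.ne_zero_iff, hu⟩

noncomputable def relVec (x : (Fin 5 → ℕ) × Fin 5 × Fin 5 × Fin 5) : V :=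
  Rvec x.1 x.2.1 x.2.2.1 x.2.2.2

section Span

open Submodule

lemma Rvec_mem_span_of_not_isPivot {m : Fin 5 → ℕ} {s t u : Fin 5} (h : IsRelIndex m s t u)
    (hu : ¬ IsPivot m u) : Rvec m s t u ∈ span ℚ (Set.range fun x : relIndex => relVec x) := by
  rcases lt_or_gt_of_ne h.hst with hst | hts
  · exact subset_span ⟨⟨(m, s, t, u), mem_relIndex.mpr ⟨h, hst, hu⟩⟩, rfl⟩
  · rw [Rvec_comm]
    exact subset_span ⟨⟨(m, t, s, u), mem_relIndex.mpr ⟨h.swap, hts, hu⟩⟩, rfl⟩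

lemma Rvec_mem_span {m : Fin 5 → ℕ} {s t u : Fin 5} (h : IsRelIndex m s t u) :
    Rvec m s t u ∈ span ℚ (Set.range fun x : relIndex => relVec x) := by
  by_cases hu : IsPivot m u
  · have hs : ¬ IsPivot m s := fun hs => h.hsu (hs.unique hu)
    have ht : ¬ IsPivot m t := fun ht => h.htu (ht.unique hu)
    have hcycle : Rvec m s t u = -(Rvec m t u s + Rvec m s u t) := by
      rw [Rvec_comm m s u t, eq_neg_iff_add_eq_zero, ← add_assoc]
      exact Rvec_add_Rvec_add_Rvec m s t u
    rw [hcycle]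
    exact neg_mem (add_mem (Rvec_mem_span_of_not_isPivot h.rotate hs)
      (Rvec_mem_span_of_not_isPivot h.rotate.rotate.swap ht))
  · exact Rvec_mem_span_of_not_isPivot h hu

lemma span_RelSetR : span ℚ RelSetR = span ℚ (Set.range fun x : relIndex => relVec x) := by
  refine le_antisymm (span_le.mpr fun v hv => ?_) (span_mono ?_)
  · obtain ⟨m, s, t, u, h, rfl⟩ := mem_RelSetR.mp hv
    exact Rvec_mem_span h
  · rintro _ ⟨⟨⟨m, s, t, u⟩, hx⟩, rfl⟩
    exact mem_RelSetR.mpr ⟨m, s, t, u, (mem_relIndex.mp hx).1, rfl⟩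

end Span

lemma relVec_apply_shift_pivot {x y : (Fin 5 → ℕ) × Fin 5 × Fin 5 × Fin 5} {p : Fin 5}
    (hx : x ∈ relIndex) (hp : IsPivot x.1 p) (hy : y ∈ relIndex) :
    relVec y s(x.1, shift x.1 x.2.2.2 p) = if y = x then -1 else 0 := by
  obtain ⟨m, s, t, u⟩ := x
  obtain ⟨m', s', t', u'⟩ := y
  obtain ⟨h, hst, hu⟩ := mem_relIndex.mp hx
  obtain ⟨h', hst', hu'⟩ := mem_relIndex.mp hy
  have hpu : p ≠ u := fun hpu => hu (hpu ▸ hp)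
  have hp1 : m p = 1 := hp.1
  have hp0 : m p ≠ 0 := by rw [hp1]; exact one_ne_zero
  by_cases hm : m' = m
  · subst hm
    rw [relVec, h'.Rvec_apply_shift hpu.symm hp0]
    by_cases huu : u' = u
    · subst huu
      obtain ⟨rfl, rfl⟩ := h.eq_of_lt h' hst hst'
      rcases h.ne_zero_iff.mp hp0 with rfl | rfl | rfl
      · simp [h.hsu, h.htu, Ne.symm h.hst]
      · simp [h.hsu, h.htu, h.hst]
      · exact absurd rfl hpu
    · have hup : u' ≠ p := fun hup => hu' (hup ▸ hp)
      simp [huu, hup]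
  · rw [relVec, Rvec_apply_of_ne hm (h.ne_shift h' hp1 hpu), if_neg]
    rintro ⟨⟩
    exact hm rfl

theorem linearIndependent_relVec : LinearIndependent ℚ fun x : relIndex => relVec x := by
  have : ∀ x : relIndex, ∃ p, IsPivot x.1.1 p := fun x =>
    exists_isPivot (mem_relIndex.mp x.2).1.exists_eq_one
  choose pivot hpivot using this
  refine .of_pairwise_dual_eq_zero_one _
    (fun x => -Finsupp.lapply s(x.1.1, shift x.1.1 x.1.2.2.2 (pivot x))) (fun x y hxy => ?_)
    fun x => ?_
  · simp [relVec_apply_shift_pivot x.2 (hpivot x) y.2, Subtype.val_injective.ne hxy.symm]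
  · simp [relVec_apply_shift_pivot x.2 (hpivot x) x.2]

/-- The 180 relation vectors `R^{st,u}_m` span a subspace of dimension
exactly 120. -/
theorem rank_of_dP3_relations :
    Module.finrank ℚ (Submodule.span ℚ RelSetR) = 120 := by
  rw [span_RelSetR, finrank_span_eq_card linearIndependent_relVec, Fintype.card_coe,
    card_relIndex]
end

section
/- The edge relation vectors E^{k,k'}_m, as m ranges over the 40 degree-5 exponent vectors with exactly two nonzero entries and as {k,k'} ranges over pairs of distinct indices outside supp(m), span a subspace of dimension exactly 80 in the ℚ-vector space V freely spanned by the 300 γ-pairs. -/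
/-- The edge relation vector `E^{k,k'}_m` for an edge divisor `D_m`
(`supp m = {i, j}`), encoding that the two toric expressions for the ruling
class `φ_m` in the directions `k` and `k'` agree. -/
noncomputable def Evec (m : Fin 5 → ℕ) (i j k k' : Fin 5) : V :=
  gvec m (fun l => m l - e i l + e k l) + gvec m (fun l => m l - e j l + e k l)
    - gvec m (fun l => m l - e i l + e k' l)
    - gvec m (fun l => m l - e j l + e k' l)

/-- The set of the edge relation vectors `E^{k,k'}_m`, as `m` ranges over the
40 degree-5 exponent vectors with exactly two nonzero entries and `{k, k'}`
over pairs of distinct indices outside `supp m`. -/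
def RelSetE : Set V :=
  {v | ∃ (m : Fin 5 → ℕ) (i j k k' : Fin 5), (∑ l, m l) = 5 ∧
    i ≠ j ∧ Function.support m = {i, j} ∧
    k ≠ k' ∧ k ∉ ({i, j} : Set (Fin 5)) ∧ k' ∉ ({i, j} : Set (Fin 5)) ∧
    v = Evec m i j k k'}

/-! For an edge vector `m` with support `{b, s}`, `b` carrying the larger exponent, write
`u_k = ⟨{m, m - e b + e k}⟩ + ⟨{m, m - e s + e k}⟩` for `k ∉ {b, s}`. Then
`E^{k,k'}_m = u_k - u_{k'}`, so the relations of `m` are spanned by the two vectors `E^{k,k₀}_m`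
for a fixed pivot `k₀`: 80 vectors in all. They are linearly independent because in the γ-pair
`{m, m - e b + e k}` only `m` has a two-element support (the other member has three), so
`E^{k,k₀}_m` is the only one of the 80 with a nonzero coefficient on it. -/

theorem Finsupp.linearIndependent_of_apply_eq_ite {ι α R : Type*} [Ring R] [DecidableEq ι]
    (f : ι → α →₀ R) (P : ι → α) (hf : ∀ p q, f p (P q) = if p = q then 1 else 0) :
    LinearIndependent R f := by
  rw [linearIndependent_iff']
  intro s g hg q hq
  have := congrArg (fun v : α →₀ R => v (P q)) hg
  simpa [Finsupp.finsetSum_apply, hf, hq] using this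

def expMove (m : Fin 5 → ℕ) (i k : Fin 5) : Fin 5 → ℕ := fun l => m l - e i l + e k l

lemma expMove_right_inj {m : Fin 5 → ℕ} {i k k' : Fin 5} :
    expMove m i k = expMove m i k' ↔ k = k' := by
  refine ⟨fun h => ?_, fun h => h ▸ rfl⟩
  have : e k k = e k' k := add_left_cancel (congrFun h k)
  simpa [e, eq_comm] using this

lemma expMove_ne_expMove {m : Fin 5 → ℕ} {b s x y : Fin 5} (hs : m s ≠ 0) (hbs : b ≠ s)
    (hx : x ≠ s) (hy : y ≠ s) : expMove m s x ≠ expMove m b y := by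
  intro h
  have := congrFun h s
  simp [expMove, e, hx.symm, hy.symm, hbs.symm] at this
  omega

lemma Evec_eq_expMove (m : Fin 5 → ℕ) (i j k k' : Fin 5) :
    Evec m i j k k' = gvec m (expMove m i k) + gvec m (expMove m j k)
      - gvec m (expMove m i k') - gvec m (expMove m j k') := rfl

lemma Evec_comm (m : Fin 5 → ℕ) (i j k k' : Fin 5) : Evec m i j k k' = Evec m j i k k' := by
  unfold Evec; abel

lemma Evec_self (m : Fin 5 → ℕ) (i j k : Fin 5) : Evec m i j k k = 0 := by
  unfold Evec; abel

/-- Every degree-5 exponent vector with two-element support is `edgeExp b s c` for exactly one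
triple, `b` being the index of the larger exponent. -/
def edgeExp (b s : Fin 5) (c : Fin 2) : Fin 5 → ℕ :=
  fun l => if l = b then 4 - c else if l = s then c + 1 else 0

lemma edgeExp_injective : ∀ b s b' s' : Fin 5, ∀ c c' : Fin 2, b ≠ s → b' ≠ s' →
    edgeExp b s c = edgeExp b' s' c' → b = b' ∧ s = s' ∧ c = c' := by
  decide

lemma sum_edgeExp {b s : Fin 5} (c : Fin 2) (h : b ≠ s) : ∑ l, edgeExp b s c l = 5 := by
  rw [Fintype.sum_eq_add b s h fun l hl => by simp [edgeExp, hl.1, hl.2]]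
  simp [edgeExp, h.symm]
  omega

lemma eq_edgeExp {m : Fin 5 → ℕ} {b s : Fin 5} (hbs : b ≠ s)
    (h0 : ∀ l, l ≠ b → l ≠ s → m l = 0) (hsum : m b + m s = 5) (hs : m s ≠ 0) (hs2 : m s ≤ 2) :
    m = edgeExp b s ⟨m s - 1, by omega⟩ := by
  funext l
  simp only [edgeExp]
  split_ifs with hlb hls
  · subst hlb; omega
  · subst hls; omega
  · exact h0 l hlb hls

lemma exists_edgeExp {m : Fin 5 → ℕ} {i j : Fin 5} (hij : i ≠ j) (hsum : ∑ l, m l = 5)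
    (hsupp : Function.support m = {i, j}) : ∃ c, m = edgeExp i j c ∨ m = edgeExp j i c := by
  have hmem : ∀ l, m l ≠ 0 ↔ l = i ∨ l = j := fun l => by
    simpa using Set.ext_iff.1 hsupp l
  have h0 : ∀ l, l ≠ i → l ≠ j → m l = 0 := fun l hi hj => by
    by_contra h; rcases (hmem l).1 h with rfl | rfl <;> contradiction
  have hij5 : m i + m j = 5 := by
    rwa [← Fintype.sum_eq_add i j hij fun l hl => h0 l hl.1 hl.2]
  have hi := (hmem i).2 (.inl rfl)
  have hj := (hmem j).2 (.inr rfl)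
  by_cases hj2 : m j ≤ 2
  · exact ⟨_, .inl (eq_edgeExp hij h0 hij5 hj hj2)⟩
  · refine ⟨_, .inr (eq_edgeExp hij.symm (fun l hj hi => h0 l hi hj) ?_ hi ?_)⟩ <;> omega

lemma support_edgeExp {b s : Fin 5} (c : Fin 2) (h : b ≠ s) :
    Function.support (edgeExp b s c) = {b, s} := by
  ext l
  simp only [Function.mem_support, edgeExp, Set.mem_insert_iff, Set.mem_singleton_iff]
  split_ifs <;> simp_all; omega

lemma support_expMove_edgeExp {b s k : Fin 5} (c : Fin 2) (h : b ≠ s) (hkb : k ≠ b)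
    (hks : k ≠ s) : Function.support (expMove (edgeExp b s c) b k) = {b, s, k} := by
  ext l
  simp only [Function.mem_support, expMove, edgeExp, e, Set.mem_insert_iff,
    Set.mem_singleton_iff]
  split_ifs <;> simp_all; omega

lemma edgeExp_ne_expMove {b s b' s' k' : Fin 5} (c c' : Fin 2) (h : b ≠ s) (h' : b' ≠ s')
    (hkb : k' ≠ b') (hks : k' ≠ s') : edgeExp b s c ≠ expMove (edgeExp b' s' c') b' k' := by
  intro heq
  have := congrArg (Set.ncard ∘ Function.support) heq
  simp only [Function.comp, support_edgeExp c h, support_expMove_edgeExp c' h' hkb hks,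
    Set.ncard_pair h] at this
  rw [Set.ncard_insert_of_notMem (by simp [h', hkb.symm]), Set.ncard_pair hks.symm] at this
  omega

def edgePivot (b s : Fin 5) : Fin 5 :=
  if b ≠ 0 ∧ s ≠ 0 then 0 else if b ≠ 1 ∧ s ≠ 1 then 1 else 2

lemma edgePivot_ne : ∀ b s : Fin 5, b ≠ s → edgePivot b s ≠ b ∧ edgePivot b s ≠ s := by
  decide

def edgeIndex : Finset (Fin 5 × Fin 5 × Fin 2 × Fin 5) :=
  Finset.univ.filter fun (b, s, _, k) => b ≠ s ∧ k ≠ b ∧ k ≠ s ∧ k ≠ edgePivot b s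

lemma card_edgeIndex : edgeIndex.card = 80 := by decide

noncomputable def edgeRel : Fin 5 × Fin 5 × Fin 2 × Fin 5 → V
  | (b, s, c, k) => Evec (edgeExp b s c) b s k (edgePivot b s)

def privatePair : Fin 5 × Fin 5 × Fin 2 × Fin 5 → Sym2 (Fin 5 → ℕ)
  | (b, s, c, k) => s(edgeExp b s c, expMove (edgeExp b s c) b k)

lemma edgeRel_apply_privatePair {p q : Fin 5 × Fin 5 × Fin 2 × Fin 5} (hp : p ∈ edgeIndex)
    (hq : q ∈ edgeIndex) : edgeRel p (privatePair q) = if p = q then 1 else 0 := by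
  obtain ⟨b, s, c, k⟩ := p
  obtain ⟨b', s', c', k'⟩ := q
  simp only [edgeIndex, Finset.mem_filter, Finset.mem_univ, true_and] at hp hq
  obtain ⟨hbs, -, hks, -⟩ := hp
  obtain ⟨hbs', hkb', hks', hkp'⟩ := hq
  have hpair : ∀ n, s(edgeExp b s c, n) = privatePair (b', s', c', k') ↔
      edgeExp b s c = edgeExp b' s' c' ∧ n = expMove (edgeExp b' s' c') b' k' := by
    intro n
    simp [privatePair, edgeExp_ne_expMove c c' hbs hbs' hkb' hks']
  simp only [edgeRel, Evec_eq_expMove, gvec, Finsupp.sub_apply, Finsupp.add_apply,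
    Finsupp.single_apply]
  by_cases hm : edgeExp b s c = edgeExp b' s' c'
  · obtain ⟨rfl, rfl, rfl⟩ := edgeExp_injective b s b' s' c c' hbs hbs' hm
    have hs : edgeExp b s c s ≠ 0 := by simp [edgeExp, hbs.symm]
    simp only [hpair, true_and, expMove_right_inj, hkp'.symm,
      expMove_ne_expMove hs hbs hks hks', expMove_ne_expMove hs hbs (edgePivot_ne b s hbs).2 hks']
    simp
  · have hne : (b, s, c, k) ≠ (b', s', c', k') := by rintro ⟨⟩; exact hm rfl
    simp [hpair, hm, hne]

lemma edgeRel_mem_RelSetE {q : Fin 5 × Fin 5 × Fin 2 × Fin 5} (hq : q ∈ edgeIndex) :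
    edgeRel q ∈ RelSetE := by
  obtain ⟨b, s, c, k⟩ := q
  simp only [edgeIndex, Finset.mem_filter, Finset.mem_univ, true_and] at hq
  obtain ⟨hbs, hkb, hks, hkp⟩ := hq
  have hp := edgePivot_ne b s hbs
  exact ⟨edgeExp b s c, b, s, k, edgePivot b s, sum_edgeExp c hbs, hbs, support_edgeExp c hbs,
    hkp, by simp [hkb, hks], by simp [hp.1, hp.2], rfl⟩

lemma Evec_edgeExp_mem_span {b s k k' : Fin 5} (c : Fin 2) (hbs : b ≠ s)
    (hk : k ∉ ({b, s} : Set (Fin 5))) (hk' : k' ∉ ({b, s} : Set (Fin 5))) :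
    Evec (edgeExp b s c) b s k k' ∈
      Submodule.span ℚ (Set.range fun q : edgeIndex => edgeRel q) := by
  have hmem : ∀ x ∉ ({b, s} : Set (Fin 5)),
      edgeRel (b, s, c, x) ∈ Submodule.span ℚ (Set.range fun q : edgeIndex => edgeRel q) := by
    intro x hx
    simp only [Set.mem_insert_iff, Set.mem_singleton_iff, not_or] at hx
    by_cases hxp : x = edgePivot b s
    · simp [edgeRel, hxp, Evec_self]
    · have hq : (b, s, c, x) ∈ edgeIndex := by simp [edgeIndex, hbs, hx.1, hx.2, hxp]
      exact Submodule.subset_span ⟨⟨_, hq⟩, rfl⟩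
  have hdiff : Evec (edgeExp b s c) b s k k' = edgeRel (b, s, c, k) - edgeRel (b, s, c, k') := by
    simp only [edgeRel, Evec]; abel
  rw [hdiff]
  exact sub_mem (hmem k hk) (hmem k' hk')

/-- The edge relation vectors `E^{k,k'}_m` span a subspace of dimension
exactly 80. -/
theorem rank_of_edge_relations :
    Module.finrank ℚ (Submodule.span ℚ RelSetE) = 80 := by
  have hspan : Submodule.span ℚ RelSetE =
      Submodule.span ℚ (Set.range fun q : edgeIndex => edgeRel q) := by
    apply le_antisymm
    · rw [Submodule.span_le]
      rintro _ ⟨m, i, j, k, k', hsum, hij, hsupp, -, hk, hk', rfl⟩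
      obtain ⟨c, rfl | rfl⟩ := exists_edgeExp hij hsum hsupp
      · exact Evec_edgeExp_mem_span c hij hk hk'
      · rw [Evec_comm]
        rw [Set.pair_comm] at hk hk'
        exact Evec_edgeExp_mem_span c hij.symm hk hk'
    · exact Submodule.span_mono (Set.range_subset_iff.2 fun q => edgeRel_mem_RelSetE q.2)
  have hind : LinearIndependent ℚ fun q : edgeIndex => edgeRel q :=
    Finsupp.linearIndependent_of_apply_eq_ite _ (fun q => privatePair q) fun p q => by
      rw [edgeRel_apply_privatePair p.2 q.2]
      exact if_congr Subtype.ext_iff.symm rfl rfl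
  rw [hspan, finrank_span_eq_card hind, Fintype.card_coe, card_edgeIndex]
end

section
/- The symmetric group S₅ acts on degree-5 exponent vectors by permuting the five coordinates, and hence acts on the set of γ-pairs; this action on the 300 γ-pairs has exactly 6 orbits (represented by γ_{s⁴t,s⁴u}, γ_{s⁴t,s³tu}, γ_{s³t²,s³tu}, γ_{s³t²,s²t²u}, γ_{s³tu,s²t²u}, and γ_{s²tu²,s²t²u}). -/
/-- `{m, n}` is a γ-pair: both are degree-5 exponent vectors, `m = n + e i − e j`
for some `i ≠ j`, and `supp m ∪ supp n` has exactly 3 elements. -/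
def IsGammaPair (m n : Fin 5 → ℕ) : Prop :=
  (∑ i, m i) = 5 ∧ (∑ i, n i) = 5 ∧
  (∃ i j : Fin 5, i ≠ j ∧ m = fun k => n k + e i k - e j k) ∧
  (Function.support m ∪ Function.support n).ncard = 3

/-- The set of γ-pairs, as unordered pairs. -/
def GammaPairs : Set (Sym2 (Fin 5 → ℕ)) :=
  {p | ∃ m n : Fin 5 → ℕ, p = s(m, n) ∧ IsGammaPair m n}

/-- The action of `σ ∈ S₅` on exponent vectors, `(σ • m) i = m (σ⁻¹ i)`,
extended to unordered pairs. -/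
def permAct (σ : Equiv.Perm (Fin 5)) (p : Sym2 (Fin 5 → ℕ)) :
    Sym2 (Fin 5 → ℕ) :=
  Sym2.map (fun m => m ∘ σ.symm) p

/- ## decidable reformulation -/

lemma isGammaPair_iff (m n : Fin 5 → ℕ) : IsGammaPair m n ↔
    (∑ i, m i) = 5 ∧ (∑ i, n i) = 5 ∧
    (∃ i j : Fin 5, i ≠ j ∧ m = fun k => n k + e i k - e j k) ∧
    (Finset.univ.filter (fun k => m k ≠ 0 ∨ n k ≠ 0)).card = 3 := by
  have h : Function.support m ∪ Function.support n =
      ↑(Finset.univ.filter (fun k => m k ≠ 0 ∨ n k ≠ 0)) := by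
    ext k; simp [Function.mem_support]
  rw [IsGammaPair, h, Set.ncard_coe_finset]

/- ## perms and reps -/

def mkPerm (f g : Fin 5 → Fin 5) (h1 : ∀ x, g (f x) = x) (h2 : ∀ x, f (g x) = x) :
    Equiv.Perm (Fin 5) := ⟨f, g, h1, h2⟩

def permL : List (Equiv.Perm (Fin 5)) :=
  [ mkPerm ![0,1,2,3,4] ![0,1,2,3,4] (by decide) (by decide)
  , mkPerm ![1,0,2,3,4] ![1,0,2,3,4] (by decide) (by decide)
  , mkPerm ![2,1,0,3,4] ![2,1,0,3,4] (by decide) (by decide)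
  , mkPerm ![0,2,1,3,4] ![0,2,1,3,4] (by decide) (by decide)
  , mkPerm ![1,2,0,3,4] ![2,0,1,3,4] (by decide) (by decide)
  , mkPerm ![2,0,1,3,4] ![1,2,0,3,4] (by decide) (by decide) ]

def r1 : Sym2 (Fin 5 → ℕ) := s(![4,1,0,0,0], ![4,0,1,0,0])
def r2 : Sym2 (Fin 5 → ℕ) := s(![4,1,0,0,0], ![3,1,1,0,0])
def r3 : Sym2 (Fin 5 → ℕ) := s(![3,2,0,0,0], ![3,1,1,0,0])
def r4 : Sym2 (Fin 5 → ℕ) := s(![3,2,0,0,0], ![2,2,1,0,0])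
def r5 : Sym2 (Fin 5 → ℕ) := s(![3,1,1,0,0], ![2,2,1,0,0])
def r6 : Sym2 (Fin 5 → ℕ) := s(![2,1,2,0,0], ![2,2,1,0,0])

def repL : List (Sym2 (Fin 5 → ℕ)) := [r1, r2, r3, r4, r5, r6]

set_option maxRecDepth 100000 in
set_option maxHeartbeats 4000000 in
theorem coreD : ∀ a b c d f g : Fin 6,
    (∑ k, (![(a:ℕ),b,c,0,0] : Fin 5 → ℕ) k) = 5 →
    (∑ k, (![(d:ℕ),f,g,0,0] : Fin 5 → ℕ) k) = 5 →
    (∃ i j : Fin 5, i ≠ j ∧ (![(a:ℕ),b,c,0,0] : Fin 5 → ℕ) =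
      fun k => (![(d:ℕ),f,g,0,0] : Fin 5 → ℕ) k + e i k - e j k) →
    (Finset.univ.filter (fun k => (![(a:ℕ),b,c,0,0] : Fin 5 → ℕ) k ≠ 0 ∨
      (![(d:ℕ),f,g,0,0] : Fin 5 → ℕ) k ≠ 0)).card = 3 →
    ∃ σ ∈ permL, ∃ r ∈ repL,
      s((![(a:ℕ),b,c,0,0] : Fin 5 → ℕ), (![(d:ℕ),f,g,0,0] : Fin 5 → ℕ)) = permAct σ r := by
  decide

lemma permAct_one (p : Sym2 (Fin 5 → ℕ)) : permAct 1 p = p := by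
  induction p using Sym2.ind with
  | _ a b => rfl

lemma permAct_mul (σ τ : Equiv.Perm (Fin 5)) (p : Sym2 (Fin 5 → ℕ)) :
    permAct σ (permAct τ p) = permAct (σ * τ) p := by
  induction p using Sym2.ind with
  | _ a b => rfl

/- ## glue : core for supported pairs -/

lemma core (m n : Fin 5 → ℕ)
    (hm3 : m 3 = 0) (hm4 : m 4 = 0) (hn3 : n 3 = 0) (hn4 : n 4 = 0)
    (hm5 : (∑ i, m i) = 5) (hn5 : (∑ i, n i) = 5)
    (hrel : ∃ i j : Fin 5, i ≠ j ∧ m = fun k => n k + e i k - e j k)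
    (hcard : (Finset.univ.filter (fun k => m k ≠ 0 ∨ n k ≠ 0)).card = 3) :
    ∃ σ ∈ permL, ∃ r ∈ repL, s(m, n) = permAct σ r := by
  have hbm : ∀ k, m k ≤ 5 := fun k =>
    hm5 ▸ Finset.single_le_sum (f := m) (fun i _ => Nat.zero_le _) (Finset.mem_univ k)
  have hbn : ∀ k, n k ≤ 5 := fun k =>
    hn5 ▸ Finset.single_le_sum (f := n) (fun i _ => Nat.zero_le _) (Finset.mem_univ k)
  obtain ⟨a, ha⟩ : ∃ a : Fin 6, (a : ℕ) = m 0 := ⟨⟨m 0, by have := hbm 0; omega⟩, rfl⟩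
  obtain ⟨b, hb⟩ : ∃ b : Fin 6, (b : ℕ) = m 1 := ⟨⟨m 1, by have := hbm 1; omega⟩, rfl⟩
  obtain ⟨c, hc⟩ : ∃ c : Fin 6, (c : ℕ) = m 2 := ⟨⟨m 2, by have := hbm 2; omega⟩, rfl⟩
  obtain ⟨d, hd⟩ : ∃ d : Fin 6, (d : ℕ) = n 0 := ⟨⟨n 0, by have := hbn 0; omega⟩, rfl⟩
  obtain ⟨f, hf⟩ : ∃ f : Fin 6, (f : ℕ) = n 1 := ⟨⟨n 1, by have := hbn 1; omega⟩, rfl⟩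
  obtain ⟨g, hg⟩ : ∃ g : Fin 6, (g : ℕ) = n 2 := ⟨⟨n 2, by have := hbn 2; omega⟩, rfl⟩
  have hm : m = ![(a : ℕ), b, c, 0, 0] := by
    funext k; fin_cases k <;> simp [ha, hb, hc, hm3, hm4]
  have hn : n = ![(d : ℕ), f, g, 0, 0] := by
    funext k; fin_cases k <;> simp [hd, hf, hg, hn3, hn4]
  clear ha hb hc hd hf hg hbm hbn hm3 hm4 hn3 hn4
  subst hm hn
  exact coreD _ _ _ _ _ _ hm5 hn5 hrel hcard

/- ## completeness -/

lemma exists_perm_map (S T : Finset (Fin 5)) (h : S.card = T.card) :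
    ∃ σ : Equiv.Perm (Fin 5), ∀ x, σ x ∈ T ↔ x ∈ S := by
  have h' : Sᶜ.card = Tᶜ.card := by simp [Finset.card_compl, h]
  let e1 : {x // x ∈ S} ≃ {x // x ∈ T} := Finset.equivOfCardEq h
  let e2a : {x // x ∉ S} ≃ {x // x ∈ Sᶜ} :=
    Equiv.subtypeEquivRight (fun x => (Finset.mem_compl (s := S)).symm)
  let e2b : {x // x ∈ Tᶜ} ≃ {x // x ∉ T} :=
    Equiv.subtypeEquivRight (fun x => Finset.mem_compl (s := T))
  let e2 : {x // x ∉ S} ≃ {x // x ∉ T} :=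
    (e2a.trans (Finset.equivOfCardEq h')).trans e2b
  refine ⟨(Equiv.sumCompl (· ∈ S)).symm.trans ((e1.sumCongr e2).trans
      (Equiv.sumCompl (· ∈ T))), fun x => ?_⟩
  by_cases hx : x ∈ S
  · simp [Equiv.sumCompl_symm_apply_of_pos (p := (· ∈ S)) hx, hx, (e1 ⟨x, hx⟩).2]
  · simp [Equiv.sumCompl_symm_apply_of_neg (p := (· ∈ S)) hx, hx, (e2 ⟨x, hx⟩).2]

lemma complete (m n : Fin 5 → ℕ) (h : IsGammaPair m n) :
    ∃ (σ : Equiv.Perm (Fin 5)) (r : Sym2 (Fin 5 → ℕ)), r ∈ repL ∧ s(m, n) = permAct σ r := by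
  rw [isGammaPair_iff] at h
  obtain ⟨hm5, hn5, ⟨i, j, hij, hrel⟩, hcard⟩ := h
  obtain ⟨σ, hσ⟩ := exists_perm_map {0,1,2}
    (Finset.univ.filter (fun k => m k ≠ 0 ∨ n k ≠ 0)) (by rw [hcard]; rfl)
  have hzero : ∀ x : Fin 5, x ∉ ({0,1,2} : Finset (Fin 5)) → m (σ x) = 0 ∧ n (σ x) = 0 := by
    intro x hx
    have : σ x ∉ Finset.univ.filter (fun k => m k ≠ 0 ∨ n k ≠ 0) := fun hmem => hx ((hσ x).1 hmem)
    simpa [Finset.mem_filter, not_or] using this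
  have h3 := hzero 3 (by decide)
  have h4 := hzero 4 (by decide)
  have hm5' : (∑ k, (m ∘ σ) k) = 5 := (Equiv.sum_comp σ m).trans hm5
  have hn5' : (∑ k, (n ∘ σ) k) = 5 := (Equiv.sum_comp σ n).trans hn5
  have hrel' : ∃ i' j' : Fin 5, i' ≠ j' ∧ (m ∘ σ) = fun k => (n ∘ σ) k + e i' k - e j' k := by
    refine ⟨σ.symm i, σ.symm j, fun hh => hij (by simpa using congrArg σ hh), funext fun k => ?_⟩
    have hk := congrFun hrel (σ k)
    have hei : e i (σ k) = e (σ.symm i) k := by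
      simp only [e]
      congr 1
      simp [Equiv.eq_symm_apply, eq_comm]
    have hej : e j (σ k) = e (σ.symm j) k := by
      simp only [e]
      congr 1
      simp [Equiv.eq_symm_apply, eq_comm]
    simpa [Function.comp, hei, hej] using hk
  have hcard' : (Finset.univ.filter (fun k => (m ∘ σ) k ≠ 0 ∨ (n ∘ σ) k ≠ 0)).card = 3 := by
    have himg : (Finset.univ.filter (fun k => (m ∘ σ) k ≠ 0 ∨ (n ∘ σ) k ≠ 0)).image σ =
        Finset.univ.filter (fun k => m k ≠ 0 ∨ n k ≠ 0) := by
      ext x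
      simp only [Finset.mem_image, Finset.mem_filter, Finset.mem_univ, true_and, Function.comp]
      constructor
      · rintro ⟨y, hy, rfl⟩; exact hy
      · intro hx; exact ⟨σ.symm x, by simpa using hx, by simp⟩
    rw [← hcard, ← himg, Finset.card_image_of_injective _ σ.injective]
  obtain ⟨τ, hτ, r, hr, heq⟩ := core (m ∘ σ) (n ∘ σ) h3.1 h4.1 h3.2 h4.2 hm5' hn5' hrel' hcard'
  refine ⟨σ * τ, r, hr, ?_⟩
  have hst : s(m, n) = permAct σ s(m ∘ σ, n ∘ σ) := by
    simp only [permAct, Sym2.map_pair_eq]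
    have h1 : (m ∘ σ) ∘ ⇑σ.symm = m := by funext x; simp
    have h2 : (n ∘ σ) ∘ ⇑σ.symm = n := by funext x; simp
    rw [h1, h2]
  rw [hst, heq, permAct_mul]

/- ## invariant and orbits -/

def invf (m : Fin 5 → ℕ) : ℕ := ∑ i, (m i)^2

def inv2 (p : Sym2 (Fin 5 → ℕ)) : ℕ :=
  Sym2.lift ⟨fun a b => (invf a + invf b) * 1000 + invf a * invf b, fun a b => by ring⟩ p

lemma inv2_permAct (σ : Equiv.Perm (Fin 5)) (p : Sym2 (Fin 5 → ℕ)) :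
    inv2 (permAct σ p) = inv2 p := by
  induction p using Sym2.ind with
  | _ a b =>
    have h : ∀ g : Fin 5 → ℕ, invf (g ∘ ⇑σ.symm) = invf g := fun g =>
      Equiv.sum_comp σ.symm (fun i => (g i)^2)
    simp [permAct, inv2, Sym2.map_pair_eq, Sym2.lift_mk, h]

def Orb (p : Sym2 (Fin 5 → ℕ)) : Set (Sym2 (Fin 5 → ℕ)) :=
  {q | ∃ σ : Equiv.Perm (Fin 5), q = permAct σ p}

lemma Orb_act (σ : Equiv.Perm (Fin 5)) (r : Sym2 (Fin 5 → ℕ)) :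
    Orb (permAct σ r) = Orb r :=
  Set.ext fun q =>
    ⟨fun ⟨τ, h⟩ => ⟨τ * σ, by rw [h, permAct_mul]⟩,
     fun ⟨τ, h⟩ => ⟨τ * σ⁻¹, by rw [h, permAct_mul, inv_mul_cancel_right]⟩⟩

lemma Orb_ne (a b : Sym2 (Fin 5 → ℕ)) (h : inv2 a ≠ inv2 b) : Orb a ≠ Orb b := by
  intro he
  have ha : a ∈ Orb a := ⟨1, (permAct_one a).symm⟩
  rw [he] at ha
  obtain ⟨σ, hσ⟩ := ha
  exact h (by rw [hσ, inv2_permAct])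

example : inv2 r1 ≠ inv2 r2 := by decide

/- ## representatives are γ-pairs -/

lemma repL_mem_GP : ∀ r ∈ repL, r ∈ GammaPairs := by
  intro r hr
  simp only [repL, List.mem_cons, List.not_mem_nil, or_false] at hr
  rcases hr with rfl | rfl | rfl | rfl | rfl | rfl
  · exact ⟨_, _, rfl, (isGammaPair_iff _ _).2 (by refine ⟨by decide, by decide, ⟨1, 2, by decide, by decide⟩, by decide⟩)⟩
  · exact ⟨_, _, rfl, (isGammaPair_iff _ _).2 (by refine ⟨by decide, by decide, ⟨0, 2, by decide, by decide⟩, by decide⟩)⟩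
  · exact ⟨_, _, rfl, (isGammaPair_iff _ _).2 (by refine ⟨by decide, by decide, ⟨1, 2, by decide, by decide⟩, by decide⟩)⟩
  · exact ⟨_, _, rfl, (isGammaPair_iff _ _).2 (by refine ⟨by decide, by decide, ⟨0, 2, by decide, by decide⟩, by decide⟩)⟩
  · exact ⟨_, _, rfl, (isGammaPair_iff _ _).2 (by refine ⟨by decide, by decide, ⟨0, 1, by decide, by decide⟩, by decide⟩)⟩
  · exact ⟨_, _, rfl, (isGammaPair_iff _ _).2 (by refine ⟨by decide, by decide, ⟨2, 1, by decide, by decide⟩, by decide⟩)⟩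


/-- The `S₅`-action on the 300 γ-pairs has exactly 6 orbits. -/
theorem six_orbits_of_gamma_pairs :
    {O : Set (Sym2 (Fin 5 → ℕ)) | ∃ p ∈ GammaPairs,
      O = {q | ∃ σ : Equiv.Perm (Fin 5), q = permAct σ p}}.ncard = 6 := by
  have hset : {O : Set (Sym2 (Fin 5 → ℕ)) | ∃ p ∈ GammaPairs,
      O = {q | ∃ σ : Equiv.Perm (Fin 5), q = permAct σ p}} =
      {Orb r1, Orb r2, Orb r3, Orb r4, Orb r5, Orb r6} := by
    ext O
    simp only [Set.mem_setOf_eq, Set.mem_insert_iff, Set.mem_singleton_iff]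
    constructor
    · rintro ⟨p, ⟨m, n, rfl, hg⟩, rfl⟩
      obtain ⟨σ, r, hr, heq⟩ := complete m n hg
      have hO : Orb s(m, n) = Orb r := by rw [heq, Orb_act]
      simp only [repL, List.mem_cons, List.not_mem_nil, or_false] at hr
      rcases hr with rfl | rfl | rfl | rfl | rfl | rfl
      · exact Or.inl hO
      · exact Or.inr (Or.inl hO)
      · exact Or.inr (Or.inr (Or.inl hO))
      · exact Or.inr (Or.inr (Or.inr (Or.inl hO)))
      · exact Or.inr (Or.inr (Or.inr (Or.inr (Or.inl hO))))
      · exact Or.inr (Or.inr (Or.inr (Or.inr (Or.inr hO))))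
    · have hmem : ∀ r ∈ repL, O = Orb r → ∃ p ∈ GammaPairs,
          O = {q | ∃ σ : Equiv.Perm (Fin 5), q = permAct σ p} :=
        fun r hr hO => ⟨r, repL_mem_GP r hr, hO⟩
      rintro (rfl | rfl | rfl | rfl | rfl | rfl)
      · exact hmem r1 (by simp [repL]) rfl
      · exact hmem r2 (by simp [repL]) rfl
      · exact hmem r3 (by simp [repL]) rfl
      · exact hmem r4 (by simp [repL]) rfl
      · exact hmem r5 (by simp [repL]) rfl
      · exact hmem r6 (by simp [repL]) rfl
  rw [hset]
  have h12 := Orb_ne r1 r2 (by decide)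
  have h13 := Orb_ne r1 r3 (by decide)
  have h14 := Orb_ne r1 r4 (by decide)
  have h15 := Orb_ne r1 r5 (by decide)
  have h16 := Orb_ne r1 r6 (by decide)
  have h23 := Orb_ne r2 r3 (by decide)
  have h24 := Orb_ne r2 r4 (by decide)
  have h25 := Orb_ne r2 r5 (by decide)
  have h26 := Orb_ne r2 r6 (by decide)
  have h34 := Orb_ne r3 r4 (by decide)
  have h35 := Orb_ne r3 r5 (by decide)
  have h36 := Orb_ne r3 r6 (by decide)
  have h45 := Orb_ne r4 r5 (by decide)
  have h46 := Orb_ne r4 r6 (by decide)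
  have h56 := Orb_ne r5 r6 (by decide)
  rw [Set.ncard_insert_of_notMem (by simp_all) (Set.toFinite _),
      Set.ncard_insert_of_notMem (by simp_all) (Set.toFinite _),
      Set.ncard_insert_of_notMem (by simp_all) (Set.toFinite _),
      Set.ncard_insert_of_notMem (by simp_all) (Set.toFinite _),
      Set.ncard_pair h56]
end
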